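/- Let f : ℂ → ℂ be twice continuously differentiable as a map of real vector spaces, and define the vector fields Γ₁ and Γ₂ of the loop QH² acting on f by (Γ₁ f)(η) = (1 − |η|²)·∂f(η) and (Γ₂ f)(η) = (1 − |η|²)·∂̄f(η). Then for every η ∈ ℂ, (Γ₁(Γ₂ f))(η) − (Γ₂(Γ₁ f))(η) = η·(Γ₁ f)(η) − conj(η)·(Γ₂ f)(η); i.e. the commutator satisfies [Γ₁, Γ₂] = η·Γ₁ − conj(η)·Γ₂. -/

import Mathlib

/-! Write ρ(η) = 1 − |η|². The Wirtinger derivatives obey the Leibniz rule and ∂ρ = −conj η,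
∂̄ρ = −η, so Γ₁Γ₂f − Γ₂Γ₁f = η·ρ∂f − conj η·ρ∂̄f + ρ²(∂∂̄f − ∂̄∂f). The last term vanishes
because ∂ and ∂̄ commute on C² maps, by the symmetry of the second derivative. -/

open Complex

/-- Wirtinger derivative ∂f(η) = (1/2)(Df(η)(1) − i·Df(η)(i)) of a real-differentiable
    map f : ℂ → ℂ. -/
noncomputable def wirtD (f : ℂ → ℂ) (η : ℂ) : ℂ :=
  (1 / 2) * (fderiv ℝ f η 1 - Complex.I * fderiv ℝ f η Complex.I)

/-- Conjugate Wirtinger derivative ∂̄f(η) = (1/2)(Df(η)(1) + i·Df(η)(i)). -/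
noncomputable def wirtDbar (f : ℂ → ℂ) (η : ℂ) : ℂ :=
  (1 / 2) * (fderiv ℝ f η 1 + Complex.I * fderiv ℝ f η Complex.I)

/-- The vector field Γ₁ = (1 − |η|²)∂_η of the loop QH². -/
noncomputable def Gamma1 (f : ℂ → ℂ) (η : ℂ) : ℂ :=
  (1 - (Complex.normSq η : ℂ)) * wirtD f η

/-- The vector field Γ₂ = (1 − |η|²)∂_{conj η} of the loop QH². -/
noncomputable def Gamma2 (f : ℂ → ℂ) (η : ℂ) : ℂ :=
  (1 - (Complex.normSq η : ℂ)) * wirtDbar f η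

theorem hasFDerivAt_ofReal_normSq (η : ℂ) :
    HasFDerivAt (fun z => (normSq z : ℂ))
      (η • (conjCLE : ℂ →L[ℝ] ℂ) + starRingEnd ℂ η • ContinuousLinearMap.id ℝ ℂ) η := by
  simp_rw [← mul_conj]
  exact (hasFDerivAt_id η).mul conjCLE.hasFDerivAt

theorem wirtD_one_sub_normSq (η : ℂ) :
    wirtD (fun z => 1 - (normSq z : ℂ)) η = -starRingEnd ℂ η := by
  simp only [wirtD, fderiv_const_sub, (hasFDerivAt_ofReal_normSq η).fderiv,
    neg_apply, add_apply, smul_apply, ContinuousLinearMap.id_apply,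
    ContinuousLinearEquiv.coe_coe, conjCLE_apply, smul_eq_mul, map_one, conj_I]
  linear_combination (starRingEnd ℂ η - η) / 2 * I_sq

theorem wirtDbar_one_sub_normSq (η : ℂ) :
    wirtDbar (fun z => 1 - (normSq z : ℂ)) η = -η := by
  simp only [wirtDbar, fderiv_const_sub, (hasFDerivAt_ofReal_normSq η).fderiv,
    neg_apply, add_apply, smul_apply, ContinuousLinearMap.id_apply,
    ContinuousLinearEquiv.coe_coe, conjCLE_apply, smul_eq_mul, map_one, conj_I]
  linear_combination (η - starRingEnd ℂ η) / 2 * I_sq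

section Wirtinger

variable {f g h : ℂ → ℂ} {η : ℂ}

theorem contDiff_wirtD {n : WithTop ℕ∞} (hf : ContDiff ℝ (n + 1) f) :
    ContDiff ℝ n (wirtD f) := by
  have hDf := hf.fderiv_right le_rfl
  unfold wirtD
  fun_prop

theorem contDiff_wirtDbar {n : WithTop ℕ∞} (hf : ContDiff ℝ (n + 1) f) :
    ContDiff ℝ n (wirtDbar f) := by
  have hDf := hf.fderiv_right le_rfl
  unfold wirtDbar
  fun_prop

theorem wirtD_mul (hg : DifferentiableAt ℝ g η) (hh : DifferentiableAt ℝ h η) :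
    wirtD (fun z => g z * h z) η = wirtD g η * h η + g η * wirtD h η := by
  simp only [wirtD, fderiv_fun_mul hg hh, add_apply, smul_apply, smul_eq_mul]
  ring

theorem wirtDbar_mul (hg : DifferentiableAt ℝ g η) (hh : DifferentiableAt ℝ h η) :
    wirtDbar (fun z => g z * h z) η = wirtDbar g η * h η + g η * wirtDbar h η := by
  simp only [wirtDbar, fderiv_fun_mul hg hh, add_apply, smul_apply, smul_eq_mul]
  ring

theorem fderiv_wirtD_apply (h : DifferentiableAt ℝ (fderiv ℝ f) η)
    (v : ℂ) :
    fderiv ℝ (wirtD f) η v =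
      1 / 2 * (fderiv ℝ (fderiv ℝ f) η v 1 - I * fderiv ℝ (fderiv ℝ f) η v I) := by
  have hD : ∀ w, HasFDerivAt (fun z => fderiv ℝ f z w)
      ((ContinuousLinearMap.apply ℝ ℂ w).comp (fderiv ℝ (fderiv ℝ f) η)) η := fun w =>
    (ContinuousLinearMap.apply ℝ ℂ w).hasFDerivAt.comp η h.hasFDerivAt
  unfold wirtD
  rw [(((hD 1).fun_sub ((hD I).const_mul I)).const_mul (1 / 2 : ℂ)).fderiv]
  simp

theorem fderiv_wirtDbar_apply (h : DifferentiableAt ℝ (fderiv ℝ f) η)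
    (v : ℂ) :
    fderiv ℝ (wirtDbar f) η v =
      1 / 2 * (fderiv ℝ (fderiv ℝ f) η v 1 + I * fderiv ℝ (fderiv ℝ f) η v I) := by
  have hD : ∀ w, HasFDerivAt (fun z => fderiv ℝ f z w)
      ((ContinuousLinearMap.apply ℝ ℂ w).comp (fderiv ℝ (fderiv ℝ f) η)) η := fun w =>
    (ContinuousLinearMap.apply ℝ ℂ w).hasFDerivAt.comp η h.hasFDerivAt
  unfold wirtDbar
  rw [(((hD 1).fun_add ((hD I).const_mul I)).const_mul (1 / 2 : ℂ)).fderiv]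
  simp [mul_add]

theorem wirtD_wirtDbar_comm (hf : ContDiffAt ℝ 2 f η) :
    wirtD (wirtDbar f) η = wirtDbar (wirtD f) η := by
  have hD : DifferentiableAt ℝ (fderiv ℝ f) η :=
    (hf.fderiv_right (m := 1) le_rfl).differentiableAt one_ne_zero
  have hsymm : fderiv ℝ (fderiv ℝ f) η 1 I = fderiv ℝ (fderiv ℝ f) η I 1 :=
    hf.isSymmSndFDerivAt (by simp) 1 I
  simp only [wirtD, wirtDbar, fderiv_wirtD_apply hD, fderiv_wirtDbar_apply hD, hsymm]
  ring

end Wirtinger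

/-- the commutator of the left quasi-invariant vector fields of QH² is
    [Γ₁, Γ₂] = η·Γ₁ − conj(η)·Γ₂. -/
theorem qh2_commutator (f : ℂ → ℂ) (hf : ContDiff ℝ 2 f) (η : ℂ) :
    Gamma1 (Gamma2 f) η - Gamma2 (Gamma1 f) η =
      η * Gamma1 f η - (starRingEnd ℂ) η * Gamma2 f η := by
  have hρ : DifferentiableAt ℝ (fun z => 1 - (normSq z : ℂ)) η :=
    ((hasFDerivAt_ofReal_normSq η).const_sub 1).differentiableAt
  have hD : DifferentiableAt ℝ (wirtD f) η :=
    ((contDiff_wirtD (n := 1) hf).differentiable one_ne_zero).differentiableAt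
  have hDbar : DifferentiableAt ℝ (wirtDbar f) η :=
    ((contDiff_wirtDbar (n := 1) hf).differentiable one_ne_zero).differentiableAt
  unfold Gamma1 Gamma2
  rw [wirtD_mul hρ hDbar, wirtDbar_mul hρ hD, wirtD_one_sub_normSq, wirtDbar_one_sub_normSq,
    wirtD_wirtDbar_comm hf.contDiffAt]
  ring
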